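/- arXiv:2202.07026 — 5 statements merged into one kernel-verified Lean document; each statement's English description precedes it below -/
import Mathlib

section
/- Let n ≥ 1, let A be a real n×n matrix, let r be a real number that is not an eigenvalue of A, and let k ∈ {1,…,n}. Define Γ = (rI − A)⁻¹e_k / (e_kᵀ(rI − A)⁻ᵀ(rI − A)⁻¹e_k) ∈ ℝⁿ. Then r is an eigenvalue of the rank-one–perturbed matrix A + e_kΓᵀ, i.e. det(A + e_kΓᵀ − rI) = 0. -/
open Matrix

/-- Euclidean (l2) norm of a vector in `Fin n → ℝ`. -/
noncomputable def euclNorm {n : ℕ} (v : Fin n → ℝ) : ℝ :=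
  ‖(EuclideanSpace.equiv (Fin n) ℝ).symm v‖

/-- If `r` is not an eigenvalue of `A`, the minimum-norm structured row perturbation
`Γ = (rI − A)⁻¹ e_k / (e_kᵀ (rI − A)⁻ᵀ (rI − A)⁻¹ e_k)` makes `r` an eigenvalue of
`A + e_k Γᵀ`. -/
theorem fragility_perturbation_achieves_eigenvalue
    (n : ℕ) (hn : 1 ≤ n) (A : Matrix (Fin n) (Fin n) ℝ) (r : ℝ)
    (hr : r ∉ spectrum ℝ A) (k : Fin n)
    (Γ : Fin n → ℝ)
    (hΓ : Γ = (Pi.single k 1 ⬝ᵥ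
        ((((r • (1 : Matrix (Fin n) (Fin n) ℝ) - A)⁻¹)ᵀ *
          (r • (1 : Matrix (Fin n) (Fin n) ℝ) - A)⁻¹) *ᵥ Pi.single k 1))⁻¹ •
        ((r • (1 : Matrix (Fin n) (Fin n) ℝ) - A)⁻¹ *ᵥ Pi.single k 1)) :
    (A + vecMulVec (Pi.single k 1) Γ - r • (1 : Matrix (Fin n) (Fin n) ℝ)).det = 0 := by
  set M : Matrix (Fin n) (Fin n) ℝ := r • (1 : Matrix (Fin n) (Fin n) ℝ) - A with hM
  have hUnit : IsUnit M := by
    rw [spectrum.mem_iff, not_not] at hr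
    simpa [hM, Algebra.algebraMap_eq_smul_one] using hr
  have hdet : IsUnit M.det := (Matrix.isUnit_iff_isUnit_det M).mp hUnit
  set e : Fin n → ℝ := Pi.single k 1 with he
  set v : Fin n → ℝ := M⁻¹ *ᵥ e with hv
  have he0 : e ≠ 0 := by
    intro h
    have := congrFun h k
    simp [he] at this
  have hv0 : v ≠ 0 := by
    intro h
    apply he0
    have : M *ᵥ (M⁻¹ *ᵥ e) = M *ᵥ 0 := by rw [← hv, h]
    simpa [Matrix.mulVec_mulVec, Matrix.mul_nonsing_inv M hdet] using this
  -- the scalar c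
  have hc : e ⬝ᵥ (((M⁻¹)ᵀ * M⁻¹) *ᵥ e) = v ⬝ᵥ v := by
    rw [← Matrix.mulVec_mulVec, Matrix.dotProduct_mulVec, Matrix.vecMul_transpose, hv]
  have hcne : v ⬝ᵥ v ≠ 0 := fun h => hv0 (dotProduct_self_eq_zero.mp h)
  have hΓv : Γ ⬝ᵥ v = 1 := by
    rw [hΓ, smul_dotProduct, hc, smul_eq_mul, inv_mul_cancel₀ hcne]
  have hker : (A + vecMulVec e Γ - r • (1 : Matrix (Fin n) (Fin n) ℝ)) *ᵥ v = 0 := by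
    have hMv : M *ᵥ v = e := by
      rw [hv, Matrix.mulVec_mulVec, Matrix.mul_nonsing_inv M hdet, Matrix.one_mulVec]
    have h1 : (A - r • (1 : Matrix (Fin n) (Fin n) ℝ)) *ᵥ v = -e := by
      have : A - r • (1 : Matrix (Fin n) (Fin n) ℝ) = -M := by rw [hM, neg_sub]
      rw [this, Matrix.neg_mulVec, hMv]
    have h2 : vecMulVec e Γ *ᵥ v = e := by
      funext i
      simp [Matrix.mulVec, Matrix.vecMulVec_apply, dotProduct, mul_assoc,
        ← Finset.mul_sum]
      have : ∑ j, Γ j * v j = 1 := by simpa [dotProduct] using hΓv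
      simp [this]
    have : A + vecMulVec e Γ - r • (1 : Matrix (Fin n) (Fin n) ℝ)
        = (A - r • (1 : Matrix (Fin n) (Fin n) ℝ)) + vecMulVec e Γ := by
      rw [add_sub_right_comm]
    rw [this, Matrix.add_mulVec, h1, h2]
    simp
  exact (Matrix.exists_mulVec_eq_zero_iff).mp ⟨v, hv0, hker⟩
end

section
/- Let n ≥ 1, let A be a real n×n matrix, let r be a real number that is not an eigenvalue of A, and let k ∈ {1,…,n}. Define Γ = (rI − A)⁻¹e_k / (e_kᵀ(rI − A)⁻ᵀ(rI − A)⁻¹e_k) ∈ ℝⁿ. Then Γ has minimum Euclidean norm among all row perturbations achieving eigenvalue r at row k: for every Γ' ∈ ℝⁿ such that r is an eigenvalue of A + e_kΓ'ᵀ, one has ‖Γ‖₂ ≤ ‖Γ'‖₂. -/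
open Matrix

theorem Matrix.det_add_vecMulVec {m α : Type*} [Fintype m] [DecidableEq m] [CommRing α]
    {A : Matrix m m α} (hA : IsUnit A.det) (u v : m → α) :
    (A + vecMulVec u v).det = A.det * (1 + v ⬝ᵥ A⁻¹ *ᵥ u) := by
  have : A + vecMulVec u v = A * (1 + vecMulVec (A⁻¹ *ᵥ u) v) := by
    rw [Matrix.mul_add, Matrix.mul_one, mul_vecMulVec, mulVec_mulVec,
      mul_nonsing_inv _ hA, one_mulVec]
  rw [this, det_mul, vecMulVec_eq Unit, det_one_add_replicateCol_mul_replicateRow]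

theorem Matrix.mem_spectrum_add_vecMulVec_iff {m 𝕜 : Type*} [Fintype m] [DecidableEq m] [Field 𝕜]
    {A : Matrix m m 𝕜} {r : 𝕜} (hr : r ∉ spectrum 𝕜 A) (u v : m → 𝕜) :
    r ∈ spectrum 𝕜 (A + vecMulVec u v) ↔ v ⬝ᵥ (r • 1 - A)⁻¹ *ᵥ u = 1 := by
  rw [spectrum.mem_iff, Algebra.algebraMap_eq_smul_one, isUnit_iff_isUnit_det] at hr ⊢
  have : r • (1 : Matrix m m 𝕜) - (A + vecMulVec u v) = (r • 1 - A) + vecMulVec (-u) v := by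
    rw [neg_vecMulVec]; abel
  rw [this, det_add_vecMulVec (not_not.1 hr), isUnit_iff_ne_zero, not_not, mul_eq_zero,
    mulVec_neg, dotProduct_neg, ← sub_eq_add_neg, sub_eq_zero, eq_comm (a := (1 : 𝕜)),
    or_iff_right (by simpa [isUnit_iff_ne_zero] using hr)]

theorem norm_inv_norm_sq_smul_le_of_inner_eq_one {E : Type*} [NormedAddCommGroup E]
    [InnerProductSpace ℝ E] {g v : E} (h : inner ℝ g v = (1 : ℝ)) :
    ‖(‖v‖ ^ 2)⁻¹ • v‖ ≤ ‖g‖ := by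
  have hCS : 1 ≤ ‖g‖ * ‖v‖ := h ▸ real_inner_le_norm g v
  have hv : 0 < ‖v‖ := by
    by_contra! hv; nlinarith [norm_nonneg g, norm_nonneg v]
  rw [norm_smul, norm_inv, norm_pow, norm_norm, sq, mul_inv, mul_assoc,
    inv_mul_cancel₀ hv.ne', mul_one, inv_le_iff_one_le_mul₀ hv]
  exact hCS

theorem euclNorm_sq {n : ℕ} (v : Fin n → ℝ) : euclNorm v ^ 2 = v ⬝ᵥ v := by
  rw [euclNorm, EuclideanSpace.norm_sq_eq]
  simp [dotProduct, sq]

theorem euclNorm_inv_dotProduct_self_smul_le {n : ℕ} {g v : Fin n → ℝ} (h : g ⬝ᵥ v = 1) :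
    euclNorm ((v ⬝ᵥ v)⁻¹ • v) ≤ euclNorm g := by
  rw [← euclNorm_sq]
  apply norm_inv_norm_sq_smul_le_of_inner_eq_one
  simpa [PiLp.inner_apply, dotProduct, mul_comm] using h

theorem fragility_perturbation_min_norm_general
    (n : ℕ) (A : Matrix (Fin n) (Fin n) ℝ) (r : ℝ)
    (hr : r ∉ spectrum ℝ A) (k : Fin n)
    (Γ : Fin n → ℝ)
    (hΓ : Γ = (Pi.single k 1 ⬝ᵥ
        ((((r • (1 : Matrix (Fin n) (Fin n) ℝ) - A)⁻¹)ᵀ *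
          (r • (1 : Matrix (Fin n) (Fin n) ℝ) - A)⁻¹) *ᵥ Pi.single k 1))⁻¹ •
        ((r • (1 : Matrix (Fin n) (Fin n) ℝ) - A)⁻¹ *ᵥ Pi.single k 1)) :
    ∀ Γ' : Fin n → ℝ, r ∈ spectrum ℝ (A + vecMulVec (Pi.single k 1) Γ') →
      euclNorm Γ ≤ euclNorm Γ' := by
  intro Γ' hΓ'
  set v := (r • (1 : Matrix (Fin n) (Fin n) ℝ) - A)⁻¹ *ᵥ Pi.single k 1
  have hΓv : Γ = (v ⬝ᵥ v)⁻¹ • v := by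
    rw [hΓ, ← mulVec_mulVec, dotProduct_mulVec, vecMul_transpose]
  rw [hΓv]
  exact euclNorm_inv_dotProduct_self_smul_le ((mem_spectrum_add_vecMulVec_iff hr _ _).1 hΓ')

/-- The fragility perturbation `Γ` has minimum Euclidean norm among all row
perturbations `Γ'` placing the eigenvalue `r` into `A + e_k Γ'ᵀ`. -/
theorem fragility_perturbation_min_norm
    (n : ℕ) (hn : 1 ≤ n) (A : Matrix (Fin n) (Fin n) ℝ) (r : ℝ)
    (hr : r ∉ spectrum ℝ A) (k : Fin n)
    (Γ : Fin n → ℝ)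
    (hΓ : Γ = (Pi.single k 1 ⬝ᵥ
        ((((r • (1 : Matrix (Fin n) (Fin n) ℝ) - A)⁻¹)ᵀ *
          (r • (1 : Matrix (Fin n) (Fin n) ℝ) - A)⁻¹) *ᵥ Pi.single k 1))⁻¹ •
        ((r • (1 : Matrix (Fin n) (Fin n) ℝ) - A)⁻¹ *ᵥ Pi.single k 1)) :
    ∀ Γ' : Fin n → ℝ, r ∈ spectrum ℝ (A + vecMulVec (Pi.single k 1) Γ') →
      euclNorm Γ ≤ euclNorm Γ' :=
  fragility_perturbation_min_norm_general n A r hr k Γ hΓ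
end

section
/- (Bauer–Fike) Let A be a complex n×n matrix that is diagonalizable, A = VΛV⁻¹ with V invertible and Λ diagonal with the eigenvalues of A on its diagonal. Let Δ be any complex n×n matrix and let r be an eigenvalue of A + Δ. Then there exists an eigenvalue λ of A such that |λ − r| ≤ κ₂(V)·‖Δ‖₂, where κ₂(V) = ‖V‖₂‖V⁻¹‖₂ is the spectral condition number of V and ‖·‖₂ is the spectral (operator 2-) norm. -/
/-!
If `r` is not an eigenvalue of `A`, then `r - A` is invertible and
`r - (A + Δ) = (r - A) (1 - (r - A)⁻¹ Δ)` is singular, so by the Neumann series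
`‖(r - A)⁻¹‖ ‖Δ‖ ≥ 1`. Since `(r - A)⁻¹ = V (r - Λ)⁻¹ V⁻¹` and the diagonal matrix `(r - Λ)⁻¹`
has operator norm `1 / minᵢ |λᵢ - r|`, the nearest eigenvalue satisfies
`minᵢ |λᵢ - r| ≤ κ₂(V) ‖Δ‖`.
-/

open Matrix

/-- Operator norm of a complex matrix induced by the Euclidean vector norm. -/
noncomputable def matOpNormC {n : ℕ} (A : Matrix (Fin n) (Fin n) ℂ) : ℝ :=
  ‖Matrix.toEuclideanCLM (𝕜 := ℂ) A‖

open scoped Matrix.Norms.L2Operator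

theorem Units.one_le_norm_inv_mul_norm_of_not_isUnit_add {R : Type*} [NormedRing R]
    [HasSummableGeomSeries R] (x : Rˣ) {t : R} (h : ¬IsUnit (↑x + t)) :
    1 ≤ ‖(↑x⁻¹ : R)‖ * ‖t‖ := by
  by_contra! hlt
  have hsmall : ‖-(↑x⁻¹ * t)‖ < 1 := by
    rw [norm_neg]
    exact (norm_mul_le _ _).trans_lt hlt
  refine h ⟨x * Units.oneSub _ hsmall, ?_⟩
  simp [mul_add]

section resolvent

variable {𝕜 A : Type*} [CommRing 𝕜]

theorem resolvent_units_conjugate [Ring A] [Algebra 𝕜 A] (u : Aˣ) (a : A) (r : 𝕜) :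
    resolvent (↑u * a * ↑u⁻¹) r = ↑u * resolvent a r * ↑u⁻¹ := by
  have hconj : algebraMap 𝕜 A r - ↑u * a * ↑u⁻¹ = ↑u * (algebraMap 𝕜 A r - a) * ↑u⁻¹ := by
    rw [mul_sub, sub_mul, ← Algebra.commutes, Units.mul_inv_cancel_right]
  rw [resolvent, hconj, Ring.inverse_mul (.inr u⁻¹.isUnit), Ring.inverse_mul (.inl u.isUnit),
    Ring.inverse_unit, Ring.inverse_unit, inv_inv, resolvent, mul_assoc]

theorem spectrum.one_le_norm_resolvent_mul_norm_of_mem_add [NormedRing A] [Algebra 𝕜 A]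
    [HasSummableGeomSeries A] {a δ : A} {r : 𝕜} (ha : r ∈ resolventSet 𝕜 a)
    (h : r ∈ spectrum 𝕜 (a + δ)) : 1 ≤ ‖resolvent a r‖ * ‖δ‖ := by
  obtain ⟨u, hu⟩ := spectrum.mem_resolventSet_iff.mp ha
  rw [resolvent, ← hu, Ring.inverse_unit, ← norm_neg δ]
  refine u.one_le_norm_inv_mul_norm_of_not_isUnit_add fun hu' ↦ spectrum.mem_iff.mp h ?_
  rwa [hu, ← sub_eq_add_neg, sub_sub] at hu'

end resolvent

namespace Matrix

variable {𝕜 n : Type*} [Fintype n] [DecidableEq n]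

theorem resolvent_diagonal [Field 𝕜] {d : n → 𝕜} {r : 𝕜} (h : ∀ i, d i ≠ r) :
    resolvent (diagonal d) r = diagonal fun i ↦ (r - d i)⁻¹ := by
  rw [resolvent, ← nonsing_inv_eq_ringInverse]
  refine inv_eq_right_inv ?_
  rw [algebraMap_eq_diagonal, diagonal_sub, diagonal_mul_diagonal, ← diagonal_one]
  exact congrArg diagonal (funext fun i ↦ mul_inv_cancel₀ (sub_ne_zero.mpr (h i).symm))

variable [RCLike 𝕜]

theorem l2_opNorm_resolvent_diagonal_le {d : n → 𝕜} {r : 𝕜} {c : ℝ} (hc : 0 < c)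
    (h : ∀ i, c ≤ ‖d i - r‖) : ‖resolvent (diagonal d) r‖ ≤ c⁻¹ := by
  have hne : ∀ i, d i ≠ r := fun i hi ↦ by simpa [hi] using hc.trans_le (h i)
  rw [resolvent_diagonal hne, l2_opNorm_diagonal, pi_norm_le_iff_of_nonneg (by positivity)]
  intro i
  rw [norm_inv, norm_sub_rev]
  exact inv_anti₀ hc (h i)

theorem l2_opNorm_resolvent_units_conjugate_diagonal_le (u : (Matrix n n 𝕜)ˣ) {d : n → 𝕜}
    {r : 𝕜} {c : ℝ} (hc : 0 < c) (h : ∀ i, c ≤ ‖d i - r‖) :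
    ‖resolvent ((u : Matrix n n 𝕜) * diagonal d * (↑u⁻¹ : Matrix n n 𝕜)) r‖ ≤
      ‖(u : Matrix n n 𝕜)‖ * c⁻¹ * ‖(↑u⁻¹ : Matrix n n 𝕜)‖ := by
  rw [resolvent_units_conjugate]
  refine norm_mul₃_le.trans ?_
  gcongr
  exact l2_opNorm_resolvent_diagonal_le hc h

end Matrix

/-- Bauer–Fike theorem: if `A = V Λ V⁻¹` is diagonalizable and `r` is an eigenvalue of
`A + Δ`, then some eigenvalue `λ` of `A` satisfies `|λ − r| ≤ κ₂(V) ‖Δ‖₂`. -/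
theorem bauer_fike
    (n : ℕ) (A V Λ Δ : Matrix (Fin n) (Fin n) ℂ)
    (hV : IsUnit V) (hΛ : Λ.IsDiag) (hA : A = V * Λ * V⁻¹)
    (r : ℂ) (hr : r ∈ spectrum ℂ (A + Δ)) :
    ∃ l ∈ spectrum ℂ A,
      ‖l - r‖ ≤ (matOpNormC V * matOpNormC V⁻¹) * matOpNormC Δ := by
  have : Nonempty (Fin n) := by
    by_contra! h
    simp [spectrum.of_subsingleton] at hr
  obtain ⟨u, rfl⟩ := hV
  obtain ⟨d, rfl⟩ : ∃ d, Λ = diagonal d := ⟨Λ.diag, hΛ.diagonal_diag.symm⟩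
  simp only [matOpNormC, ← cstar_norm_def, ← coe_units_inv] at hA ⊢
  obtain ⟨i, -, hi⟩ := Finset.exists_min_image .univ (fun j ↦ ‖d j - r‖) Finset.univ_nonempty
  have hspec : spectrum ℂ A = Set.range d := by
    rw [hA, spectrum.units_conjugate, spectrum_diagonal]
  refine ⟨d i, hspec ▸ Set.mem_range_self i, ?_⟩
  rcases (norm_nonneg (d i - r)).eq_or_lt with h0 | hpos
  · rw [← h0]
    positivity
  have hres : r ∈ resolventSet ℂ A := by
    rw [← Set.notMem_compl_iff, ← spectrum, hspec]
    rintro ⟨j, rfl⟩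
    simpa using hpos.trans_le (hi j (Finset.mem_univ j))
  have hbound := l2_opNorm_resolvent_units_conjugate_diagonal_le u hpos
    fun j ↦ hi j (Finset.mem_univ j)
  rw [← hA] at hbound
  calc ‖d i - r‖ ≤ ‖d i - r‖ * (‖resolvent A r‖ * ‖Δ‖) :=
        le_mul_of_one_le_right hpos.le (spectrum.one_le_norm_resolvent_mul_norm_of_mem_add hres hr)
    _ ≤ ‖d i - r‖ * (‖(u : Matrix (Fin n) (Fin n) ℂ)‖ * ‖d i - r‖⁻¹ *
        ‖(↑u⁻¹ : Matrix (Fin n) (Fin n) ℂ)‖ * ‖Δ‖) := by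
        gcongr
    _ = _ := by field_simp
end

section
/- (Intermediate upper bound on neural fragility) Let A be a real n×n matrix with operator 2-norm ‖A‖₂ < 1, let r be a real number that is not an eigenvalue of A, and let k ∈ {1,…,n}. Then the neural fragility Γ_A = (rI − A)⁻¹e_k / (e_kᵀ(rI − A)⁻ᵀ(rI − A)⁻¹e_k) satisfies ‖Γ_A‖₂ ≤ ‖(A − rI)⁻¹‖₂ · (|r| + 1)². -/
open Matrix

/-- Operator norm of a real matrix induced by the Euclidean vector norm. -/
noncomputable def matOpNorm {n : ℕ} (A : Matrix (Fin n) (Fin n) ℝ) : ℝ :=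
  ‖Matrix.toEuclideanCLM (𝕜 := ℝ) A‖

/-!
With `M = rI - A` and `v = M⁻¹ e_k`, the denominator of `Γ` is `‖v‖²`, so `Γ = v / ‖v‖²` and
`‖Γ‖ = 1 / ‖v‖`. Since `M v = e_k` is a unit vector, `1 ≤ ‖M‖ ‖v‖`, i.e. `‖Γ‖ ≤ ‖M‖`. Finally
`1 ≤ ‖M⁻¹‖ ‖M‖` turns this into `‖Γ‖ ≤ ‖M⁻¹‖ ‖M‖²`, and `‖M‖ ≤ |r| + ‖A‖ ≤ |r| + 1`.
-/

open scoped Matrix.Norms.L2Operator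

theorem one_le_norm_ringInverse_mul_norm {R : Type*} [NormedRing R] [NormOneClass R] {a : R}
    (ha : IsUnit a) : 1 ≤ ‖Ring.inverse a‖ * ‖a‖ :=
  calc (1 : ℝ) = ‖Ring.inverse a * a‖ := by rw [Ring.inverse_mul_cancel a ha, norm_one]
    _ ≤ ‖Ring.inverse a‖ * ‖a‖ := norm_mul_le _ _

theorem norm_smul_one_sub_le {R : Type*} [NormedRing R] [NormedAlgebra ℝ R] [NormOneClass R]
    (r : ℝ) (a : R) : ‖r • (1 : R) - a‖ ≤ |r| + ‖a‖ :=
  calc ‖r • (1 : R) - a‖ ≤ ‖r • (1 : R)‖ + ‖a‖ := norm_sub_le _ _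
    _ = |r| + ‖a‖ := by rw [norm_smul, norm_one, mul_one, Real.norm_eq_abs]

theorem ContinuousLinearMap.inv_norm_le_opNorm_of_norm_apply_eq_one {𝕜 E F : Type*}
    [NontriviallyNormedField 𝕜] [SeminormedAddCommGroup E] [SeminormedAddCommGroup F]
    [NormedSpace 𝕜 E] [NormedSpace 𝕜 F] (f : E →L[𝕜] F) {x : E} (hx : ‖f x‖ = 1) :
    ‖x‖⁻¹ ≤ ‖f‖ := by
  have h : 1 ≤ ‖f‖ * ‖x‖ := hx ▸ f.le_opNorm x
  have hx_pos : 0 < ‖x‖ := pos_of_mul_pos_right (one_pos.trans_le h) (norm_nonneg f)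
  exact (inv_le_iff_one_le_mul₀ hx_pos).mpr h

theorem Matrix.dotProduct_transpose_mul_self_mulVec {m n α : Type*} [Fintype m] [Fintype n]
    [CommSemiring α] (B : Matrix m n α) (x : n → α) :
    x ⬝ᵥ (Bᵀ * B) *ᵥ x = B *ᵥ x ⬝ᵥ B *ᵥ x := by
  rw [← mulVec_mulVec, dotProduct_mulVec, vecMul_transpose]

theorem Matrix.inv_neg {n α : Type*} [Fintype n] [DecidableEq n] [CommRing α] (A : Matrix n n α) :
    (-A)⁻¹ = -A⁻¹ := by
  by_cases h : IsUnit A.det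
  · exact inv_eq_right_inv (by rw [neg_mul_neg, mul_nonsing_inv A h])
  · have h' : ¬IsUnit (-A).det := by
      rwa [det_neg, IsUnit.mul_iff, and_iff_right (isUnit_neg_one.pow _)]
    rw [nonsing_inv_apply_not_isUnit _ h, nonsing_inv_apply_not_isUnit _ h', neg_zero]

theorem matOpNorm_eq_norm {n : ℕ} (A : Matrix (Fin n) (Fin n) ℝ) : matOpNorm A = ‖A‖ := rfl

theorem euclNorm_eq_norm_toLp {n : ℕ} (v : Fin n → ℝ) : euclNorm v = ‖WithLp.toLp 2 v‖ := rfl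

theorem dotProduct_self_eq_euclNorm_sq {n : ℕ} (v : Fin n → ℝ) : v ⬝ᵥ v = euclNorm v ^ 2 := by
  rw [euclNorm_eq_norm_toLp, EuclideanSpace.norm_sq_eq]
  simp [dotProduct, sq]

theorem euclNorm_smul {n : ℕ} (c : ℝ) (v : Fin n → ℝ) : euclNorm (c • v) = |c| * euclNorm v := by
  rw [euclNorm_eq_norm_toLp, WithLp.toLp_smul, norm_smul, Real.norm_eq_abs]; rfl

theorem euclNorm_inv_dotProduct_self_smul {n : ℕ} (v : Fin n → ℝ) :
    euclNorm ((v ⬝ᵥ v)⁻¹ • v) = (euclNorm v)⁻¹ := by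
  rw [euclNorm_smul, dotProduct_self_eq_euclNorm_sq, abs_of_nonneg (by positivity)]
  rcases eq_or_ne (euclNorm v) 0 with h | h
  · simp [h]
  · field_simp

theorem euclNorm_single_one {n : ℕ} (k : Fin n) : euclNorm (Pi.single k 1) = 1 := by
  simp [euclNorm_eq_norm_toLp]

theorem inv_euclNorm_le_matOpNorm {n : ℕ} (M : Matrix (Fin n) (Fin n) ℝ) {v : Fin n → ℝ}
    (hv : euclNorm (M *ᵥ v) = 1) : (euclNorm v)⁻¹ ≤ matOpNorm M :=
  (toEuclideanCLM (𝕜 := ℝ) M).inv_norm_le_opNorm_of_norm_apply_eq_one hv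

theorem fragility_intermediate_upper_bound_general
    (n : ℕ) (A : Matrix (Fin n) (Fin n) ℝ)
    (hA : matOpNorm A < 1)
    (r : ℝ) (hr : r ∉ spectrum ℝ A) (k : Fin n)
    (Γ : Fin n → ℝ)
    (hΓ : Γ = (Pi.single k 1 ⬝ᵥ
        ((((r • (1 : Matrix (Fin n) (Fin n) ℝ) - A)⁻¹)ᵀ *
          (r • (1 : Matrix (Fin n) (Fin n) ℝ) - A)⁻¹) *ᵥ Pi.single k 1))⁻¹ •
        ((r • (1 : Matrix (Fin n) (Fin n) ℝ) - A)⁻¹ *ᵥ Pi.single k 1)) :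
    euclNorm Γ ≤
      matOpNorm ((A - r • (1 : Matrix (Fin n) (Fin n) ℝ))⁻¹) * (|r| + 1) ^ 2 := by
  -- makes `‖(1 : Matrix (Fin n) (Fin n) ℝ)‖ = 1` available (it fails for `n = 0`)
  have : Nonempty (Fin n) := ⟨k⟩
  set M := r • (1 : Matrix (Fin n) (Fin n) ℝ) - A
  have hM : IsUnit M := by
    simpa [Algebra.algebraMap_eq_smul_one] using spectrum.notMem_iff.mp hr
  set v := M⁻¹ *ᵥ Pi.single k 1
  have hMv : M *ᵥ v = Pi.single k 1 := by
    rw [mulVec_mulVec, mul_nonsing_inv _ ((isUnit_iff_isUnit_det M).mp hM), one_mulVec]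
  rw [hΓ, dotProduct_transpose_mul_self_mulVec, euclNorm_inv_dotProduct_self_smul,
    ← neg_sub, Matrix.inv_neg, matOpNorm_eq_norm, norm_neg]
  calc (euclNorm v)⁻¹ ≤ ‖M‖ := inv_euclNorm_le_matOpNorm M (by rw [hMv, euclNorm_single_one])
    _ ≤ ‖M⁻¹‖ * ‖M‖ * ‖M‖ := by
      rw [nonsing_inv_eq_ringInverse]
      exact le_mul_of_one_le_left (norm_nonneg M) (one_le_norm_ringInverse_mul_norm hM)
    _ ≤ ‖M⁻¹‖ * (|r| + 1) ^ 2 := by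
      rw [mul_assoc, ← sq]
      gcongr
      calc ‖M‖ ≤ |r| + ‖A‖ := norm_smul_one_sub_le r A
        _ ≤ |r| + 1 := by grw [← matOpNorm_eq_norm, hA]

/-- Intermediate upper bound on neural fragility:
`‖Γ_A‖₂ ≤ ‖(A − rI)⁻¹‖₂ (|r| + 1)²` when `‖A‖₂ < 1`. -/
theorem fragility_intermediate_upper_bound
    (n : ℕ) (hn : 1 ≤ n) (A : Matrix (Fin n) (Fin n) ℝ)
    (hA : matOpNorm A < 1)
    (r : ℝ) (hr : r ∉ spectrum ℝ A) (k : Fin n)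
    (Γ : Fin n → ℝ)
    (hΓ : Γ = (Pi.single k 1 ⬝ᵥ
        ((((r • (1 : Matrix (Fin n) (Fin n) ℝ) - A)⁻¹)ᵀ *
          (r • (1 : Matrix (Fin n) (Fin n) ℝ) - A)⁻¹) *ᵥ Pi.single k 1))⁻¹ •
        ((r • (1 : Matrix (Fin n) (Fin n) ℝ) - A)⁻¹ *ᵥ Pi.single k 1)) :
    euclNorm Γ ≤
      matOpNorm ((A - r • (1 : Matrix (Fin n) (Fin n) ℝ))⁻¹) * (|r| + 1) ^ 2 :=
  fragility_intermediate_upper_bound_general n A hA r hr k Γ hΓ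
end

section
/- (Upper bound on neural fragility of an estimated linear system) Let A, E be real n×n matrices with ‖A‖₂ < 1 and ‖E‖₂ ≤ ε, set Â = A + E, let r be a real number that is not an eigenvalue of A, and assume ‖E‖₂ · ‖(A − rI)⁻¹‖₂ < 1. Let k ∈ {1,…,n}. Then Â − rI is invertible, and the neural fragility Γ_Â = (rI − Â)⁻¹e_k / (e_kᵀ(rI − Â)⁻ᵀ(rI − Â)⁻¹e_k) satisfies ‖Γ_Â‖₂ ≤ (‖(A − rI)⁻¹‖₂ / (1 − ‖E‖₂·‖(A − rI)⁻¹‖₂)) · (|r| + 1 + ε)². -/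
set_option maxHeartbeats 1000000

open Matrix

private lemma oneSub_inv_norm_le {R : Type*} [NormedRing R] [NormOneClass R] [CompleteSpace R]
    (t : R) (h : ‖t‖ < 1) : ‖((Units.oneSub t h)⁻¹ : Rˣ).val‖ ≤ (1 - ‖t‖)⁻¹ := by
  have h1 : ((Units.oneSub t h)⁻¹ : Rˣ).val = ∑' n : ℕ, t ^ n := rfl
  have h2 := tsum_geometric_le_of_norm_lt_one t h
  rw [norm_one] at h2
  rw [h1]; linarith

open scoped Matrix.Norms.L2Operator

/-- Upper bound on the neural fragility of the estimated linear system `Â = A + E`: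
`Â − rI` is invertible and
`‖Γ_Â‖₂ ≤ (‖(A − rI)⁻¹‖₂ / (1 − ‖E‖₂ ‖(A − rI)⁻¹‖₂)) (|r| + 1 + ε)²`. -/
theorem fragility_estimated_upper_bound
    (n : ℕ) (hn : 1 ≤ n) (A E : Matrix (Fin n) (Fin n) ℝ) (ε : ℝ)
    (hA : matOpNorm A < 1) (hE : matOpNorm E ≤ ε)
    (r : ℝ) (hr : r ∉ spectrum ℝ A)
    (hsmall : matOpNorm E * matOpNorm ((A - r • (1 : Matrix (Fin n) (Fin n) ℝ))⁻¹) < 1)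
    (k : Fin n)
    (Γ : Fin n → ℝ)
    (hΓ : Γ = (Pi.single k 1 ⬝ᵥ
        ((((r • (1 : Matrix (Fin n) (Fin n) ℝ) - (A + E))⁻¹)ᵀ *
          (r • (1 : Matrix (Fin n) (Fin n) ℝ) - (A + E))⁻¹) *ᵥ Pi.single k 1))⁻¹ •
        ((r • (1 : Matrix (Fin n) (Fin n) ℝ) - (A + E))⁻¹ *ᵥ Pi.single k 1)) :
    IsUnit (A + E - r • (1 : Matrix (Fin n) (Fin n) ℝ)) ∧
    euclNorm Γ ≤
      matOpNorm ((A - r • (1 : Matrix (Fin n) (Fin n) ℝ))⁻¹) /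
        (1 - matOpNorm E * matOpNorm ((A - r • (1 : Matrix (Fin n) (Fin n) ℝ))⁻¹)) *
        (|r| + 1 + ε) ^ 2 := by
  haveI : Nonempty (Fin n) := ⟨⟨0, hn⟩⟩
  haveI : Nontrivial (EuclideanSpace ℝ (Fin n)) := by
    refine ⟨0, EuclideanSpace.single ⟨0, hn⟩ 1, fun h => ?_⟩
    have := congrArg norm h
    rw [norm_zero, EuclideanSpace.norm_single] at this
    norm_num at this
  haveI : CompleteSpace (Matrix (Fin n) (Fin n) ℝ) := FiniteDimensional.complete ℝ _
  haveI : NormOneClass (Matrix (Fin n) (Fin n) ℝ) := by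
    constructor
    rw [Matrix.cstar_norm_def, _root_.map_one]
    exact norm_one
  -- translate matOpNorm to the L2 operator norm on matrices
  have hmon : ∀ X : Matrix (Fin n) (Fin n) ℝ, matOpNorm X = ‖X‖ :=
    fun X => (Matrix.cstar_norm_def X).symm
  -- basic objects
  set B' : Matrix (Fin n) (Fin n) ℝ := r • 1 - A with hB'def
  have hB'unit : IsUnit B' := by
    rw [spectrum.mem_iff, not_not, Algebra.algebraMap_eq_smul_one] at hr
    exact hr
  have hB'det : IsUnit B'.det := (Matrix.isUnit_iff_isUnit_det B').mp hB'unit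
  set C' : Matrix (Fin n) (Fin n) ℝ := B'⁻¹ with hC'def
  have hBC' : B' * C' = 1 := Matrix.mul_nonsing_inv B' hB'det
  have hCB' : C' * B' = 1 := Matrix.nonsing_inv_mul B' hB'det
  -- the matrix appearing in the statement
  have hinvB : (A - r • (1 : Matrix (Fin n) (Fin n) ℝ))⁻¹ = -C' := by
    apply Matrix.inv_eq_left_inv
    rw [neg_mul, ← mul_neg, neg_sub, ← hB'def, hCB']
  set β : ℝ := matOpNorm ((A - r • (1 : Matrix (Fin n) (Fin n) ℝ))⁻¹) with hβ
  set te : ℝ := matOpNorm E with hte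
  have hβ' : β = ‖C'‖ := by rw [hβ, hmon, hinvB, norm_neg]
  have hte' : te = ‖E‖ := by rw [hte, hmon]
  have hβ0 : 0 ≤ β := by rw [hβ']; exact norm_nonneg _
  have hte0 : 0 ≤ te := by rw [hte']; exact norm_nonneg _
  -- the perturbation x
  set x : Matrix (Fin n) (Fin n) ℝ := C' * E with hx
  have hxnorm : ‖x‖ ≤ te * β := by
    rw [hx]
    calc ‖C' * E‖ ≤ ‖C'‖ * ‖E‖ := norm_mul_le _ _
      _ = te * β := by rw [← hβ', ← hte', mul_comm]
  have hxlt : ‖x‖ < 1 := lt_of_le_of_lt hxnorm hsmall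
  set u1 : (Matrix (Fin n) (Fin n) ℝ)ˣ := Units.oneSub x hxlt with hu1
  -- the matrix N = rI - (A + E) and its factorization
  set N : Matrix (Fin n) (Fin n) ℝ := r • 1 - (A + E) with hNdef
  have hNfact : N = B' * u1.val := by
    rw [hu1, Units.val_oneSub, hx, mul_sub, mul_one, ← mul_assoc, hBC', one_mul, hNdef,
      hB'def, sub_sub]
  have hNunit : IsUnit N := by
    rw [hNfact]
    exact hB'unit.mul u1.isUnit
  have hNdet : IsUnit N.det := (Matrix.isUnit_iff_isUnit_det N).mp hNunit
  constructor
  · have : A + E - r • (1 : Matrix (Fin n) (Fin n) ℝ) = -N := by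
      rw [hNdef, neg_sub]
    rw [this]
    exact hNunit.neg
  -- the matrix M = N⁻¹
  set M : Matrix (Fin n) (Fin n) ℝ := N⁻¹ with hM
  have hMN : M * N = 1 := Matrix.nonsing_inv_mul N hNdet
  have hNM : N * M = 1 := Matrix.mul_nonsing_inv N hNdet
  have hMeq : M = (u1⁻¹ : _ˣ).val * C' := by
    rw [hM]
    apply Matrix.inv_eq_left_inv
    rw [hNfact, mul_assoc, ← mul_assoc C', hCB', one_mul, Units.inv_mul]
  have hMnorm : ‖M‖ ≤ β / (1 - te * β) := by
    have h1 : ‖(u1⁻¹ : _ˣ).val‖ ≤ (1 - ‖x‖)⁻¹ := oneSub_inv_norm_le x hxlt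
    have h2 : (1 - ‖x‖)⁻¹ ≤ (1 - te * β)⁻¹ := by
      apply inv_anti₀
      · linarith
      · linarith
    calc ‖M‖ = ‖(u1⁻¹ : _ˣ).val * C'‖ := by rw [hMeq]
      _ ≤ ‖(u1⁻¹ : _ˣ).val‖ * ‖C'‖ := norm_mul_le _ _
      _ ≤ (1 - te * β)⁻¹ * β := by
          apply mul_le_mul (le_trans h1 h2) (le_of_eq hβ'.symm) (norm_nonneg _)
          exact inv_nonneg.mpr (by linarith)
      _ = β / (1 - te * β) := by rw [div_eq_inv_mul]
  have hNnorm : ‖N‖ ≤ |r| + 1 + ε := by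
    have hA' : ‖A‖ < 1 := by rw [← hmon]; exact hA
    have hE' : ‖E‖ ≤ ε := by rw [← hmon]; exact hE
    calc ‖N‖ = ‖r • (1 : Matrix (Fin n) (Fin n) ℝ) - (A + E)‖ := by rw [hNdef]
      _ ≤ ‖r • (1 : Matrix (Fin n) (Fin n) ℝ)‖ + ‖A + E‖ := norm_sub_le _ _
      _ ≤ ‖r • (1 : Matrix (Fin n) (Fin n) ℝ)‖ + (‖A‖ + ‖E‖) := by
          gcongr
          exact norm_add_le _ _
      _ ≤ |r| + (1 + ε) := by
          rw [norm_smul, norm_one, Real.norm_eq_abs, mul_one]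
          linarith
      _ = |r| + 1 + ε := by ring
  -- the key operator-norm bound for matrix-vector products
  have hkey : ∀ (X : Matrix (Fin n) (Fin n) ℝ) (v : Fin n → ℝ),
      euclNorm (X *ᵥ v) ≤ ‖X‖ * euclNorm v :=
    fun X v => X.l2_opNorm_mulVec ((EuclideanSpace.equiv (Fin n) ℝ).symm v)
  -- vectors
  set e : Fin n → ℝ := Pi.single k 1 with he
  set u : Fin n → ℝ := M *ᵥ e with hu
  have heN : N *ᵥ u = e := by
    rw [hu, Matrix.mulVec_mulVec, hNM, Matrix.one_mulVec]
  have henorm : euclNorm e = 1 := by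
    rw [euclNorm, he]
    rw [show ((EuclideanSpace.equiv (Fin n) ℝ).symm (Pi.single k 1) : EuclideanSpace ℝ (Fin n))
      = EuclideanSpace.single k 1 from rfl]
    rw [EuclideanSpace.norm_single]
    norm_num
  have hu0 : 0 ≤ euclNorm u := norm_nonneg _
  have huN : 1 ≤ ‖N‖ * euclNorm u := by
    calc (1 : ℝ) = euclNorm e := henorm.symm
      _ = euclNorm (N *ᵥ u) := by rw [heN]
      _ ≤ ‖N‖ * euclNorm u := hkey N u
  have hupos : 0 < euclNorm u := by
    by_contra h
    push_neg at h
    have : euclNorm u = 0 := le_antisymm h hu0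
    rw [this, mul_zero] at huN
    linarith
  -- the scalar c
  set c : ℝ := e ⬝ᵥ ((Mᵀ * M) *ᵥ e) with hc
  have hcuu : c = u ⬝ᵥ u := by
    rw [hc, ← Matrix.mulVec_mulVec, Matrix.dotProduct_mulVec, Matrix.vecMul_transpose, ← hu]
  have hcnorm : c = euclNorm u ^ 2 := by
    rw [hcuu, dotProduct, euclNorm, EuclideanSpace.norm_eq,
      Real.sq_sqrt (by positivity)]
    congr 1
    funext i
    rw [Real.norm_eq_abs, sq_abs, sq]
    rfl
  -- the norm of Γ
  have hnormΓ : euclNorm Γ = (euclNorm u)⁻¹ := by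
    have h5 : (EuclideanSpace.equiv (Fin n) ℝ).symm Γ
        = c⁻¹ • (EuclideanSpace.equiv (Fin n) ℝ).symm u := by
      rw [hΓ, _root_.map_smul]
    rw [euclNorm, h5, norm_smul, Real.norm_eq_abs, abs_inv, hcnorm]
    rw [abs_of_nonneg (by positivity), sq, mul_inv]
    rw [show ‖(EuclideanSpace.equiv (Fin n) ℝ).symm u‖ = euclNorm u from rfl]
    field_simp
  -- final chain
  have hMnorm0 : 0 ≤ ‖M‖ := norm_nonneg _
  have hN0 : 0 ≤ ‖N‖ := norm_nonneg _
  have h1 : (euclNorm u)⁻¹ ≤ ‖N‖ := by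
    rw [inv_le_iff_one_le_mul₀ hupos]
    linarith [huN]
  have h3 : (1 : ℝ) ≤ ‖M‖ * ‖N‖ := by
    calc (1 : ℝ) = ‖(1 : Matrix (Fin n) (Fin n) ℝ)‖ := norm_one.symm
      _ = ‖M * N‖ := by rw [hMN]
      _ ≤ ‖M‖ * ‖N‖ := norm_mul_le _ _
  have hden : 0 < 1 - te * β := by linarith
  have hrε : 0 ≤ |r| + 1 + ε := by
    have := abs_nonneg r
    linarith [le_trans hte0 hE]
  rw [hnormΓ]
  calc (euclNorm u)⁻¹ ≤ ‖N‖ := h1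
    _ ≤ (‖M‖ * ‖N‖) * ‖N‖ := by nlinarith
    _ = ‖M‖ * ‖N‖ ^ 2 := by ring
    _ ≤ (β / (1 - te * β)) * (|r| + 1 + ε) ^ 2 := by
        apply mul_le_mul hMnorm _ (by positivity) (by positivity)
        exact pow_le_pow_left₀ hN0 hNnorm 2
end
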